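/- arXiv:2401.08463 — 3 statements merged into one kernel-verified Lean document; each statement's English description precedes it below -/
import Mathlib

section
/- Let M ≥ 0. Under the stated hypotheses on μ and f, the global discrepancy c₁ := ∫_{x ∈ [0,∞)} f(x, M) dμ(x) satisfies 1/2 ≤ c₁ < 1. -/
/-! Split the total mass `1 = ∫_{x<0} f(x,M) + c₁`. The negative half is positive, since `f > 0`
and `μ((-∞,0)) > 0`, so `c₁ < 1`. By monotonicity it is at most `∫_{x<0} f(x,-M)`, which
the symmetries of `f` and `μ` turn into `∫_{x>0} f(x,M) ≤ c₁`, so `c₁ ≥ 1/2`. -/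

open MeasureTheory

theorem setIntegral_neg_comp_of_map_neg_eq {G E : Type*} [MeasurableSpace G] [InvolutiveNeg G]
    [MeasurableNeg G] [NormedAddCommGroup E] [NormedSpace ℝ E] {μ : Measure G}
    (hμ : μ.map (fun x => -x) = μ) (g : G → E) (s : Set G) :
    ∫ x in -s, g (-x) ∂μ = ∫ x in s, g x ∂μ := by
  conv_rhs => rw [← hμ]
  exact (measurableEmbedding_neg.setIntegral_map g s).symm

theorem setIntegral_pos_of_forall_pos {X : Type*} [MeasurableSpace X] {μ : Measure X}
    {g : X → ℝ} {s : Set X} (hs : MeasurableSet s) (hg : ∀ x ∈ s, 0 < g x)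
    (hgs : IntegrableOn g s μ) (hμs : 0 < μ s) : 0 < ∫ x in s, g x ∂μ := by
  rw [setIntegral_pos_iff_support_of_nonneg_ae
    ((ae_restrict_iff' hs).2 (.of_forall fun x hx => (hg x hx).le)) hgs]
  rwa [Set.inter_eq_self_of_subset_right fun x hx => Function.mem_support.2 (hg x hx).ne']

/-- Let `M ≥ 0`. Under conditions (A1)–(A3) of a valid parameterization
(normalization, symmetry, monotonicity), together with reflection-invariance of `μ` and
`μ((-∞,0)) > 0`, the global discrepancy `c₁ = ∫_{x ∈ [0,∞)} f(x, M) dμ(x)`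
satisfies `1/2 ≤ c₁ < 1`. -/
theorem global_discrepancy_bounds
    (μ : Measure ℝ) (M : ℝ) (hM : 0 ≤ M)
    (hμinv : μ.map (fun x => -x) = μ)
    (hμneg : 0 < μ (Set.Iio 0))
    (f : ℝ → ℝ → ℝ)
    (hpos : ∀ x y, 0 < f x y)
    (hint : ∀ y, Integrable (fun x => f x y) μ)
    (hnorm : ∀ y, ∫ x, f x y ∂μ = 1)
    (hsym : ∀ x y, f x y = f (-x) (-y))
    (hmono : ∀ x < (0 : ℝ), Antitone (fun y => f x y)) :
    1 / 2 ≤ ∫ x in Set.Ici (0 : ℝ), f x M ∂μ ∧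
      ∫ x in Set.Ici (0 : ℝ), f x M ∂μ < 1 := by
  have hsplit : ∫ x in Set.Iio 0, f x M ∂μ + ∫ x in Set.Ici 0, f x M ∂μ = 1 := by
    rw [intervalIntegral.integral_Iio_add_Ici (hint M).integrableOn (hint M).integrableOn]
    exact hnorm M
  have hneg_pos : 0 < ∫ x in Set.Iio 0, f x M ∂μ :=
    setIntegral_pos_of_forall_pos measurableSet_Iio (fun x _ => hpos x M)
      (hint M).integrableOn hμneg
  have hneg_le_pos : ∫ x in Set.Iio 0, f x M ∂μ ≤ ∫ x in Set.Ici 0, f x M ∂μ :=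
    calc ∫ x in Set.Iio 0, f x M ∂μ
        ≤ ∫ x in Set.Iio 0, f x (-M) ∂μ :=
          setIntegral_mono_on (hint M).integrableOn (hint (-M)).integrableOn measurableSet_Iio
            fun x hx => hmono x hx (by linarith)
      _ = ∫ x in Set.Ioi 0, f x M ∂μ := by
          rw [← setIntegral_neg_comp_of_map_neg_eq hμinv, Set.neg_Iio, neg_zero]
          simp only [hsym _ M]
      _ ≤ ∫ x in Set.Ici 0, f x M ∂μ :=
          setIntegral_mono_set (hint M).integrableOn (.of_forall fun x => (hpos x M).le)
            (.of_forall Set.Ioi_subset_Ici_self)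
  constructor <;> linarith
end

section
/- If the graph G is connected, then l is strictly concave on the hyperplane {u : Fin n → ℝ | ∑_i u_i = 0}: for all u ≠ w with ∑_i u_i = ∑_i w_i = 0, one has l((u+w)/2) > (l(u)+l(w))/2. Consequently, l has at most one maximizer on this hyperplane; i.e., the maximum likelihood estimator, when it exists, is unique under the identifiability constraint 1ᵀu = 0. -/
/-!
Every edge term `φ i j (u i - u j)` is midpoint concave in `u`, strictly so between `u` and `w`
whenever `u i - u j ≠ w i - w j`. For `u ≠ w` with equal coordinate sums, `u - w` is not constant,
so on a connected graph it changes across some edge, which makes the whole sum strictly concave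
along `[u, w]`. Two distinct maximizers on the hyperplane would then be beaten by their midpoint.
-/

open Finset

namespace SimpleGraph

variable {V : Type*} {G : SimpleGraph V}

theorem Connected.apply_eq_of_forall_adj {α : Type*} (hG : G.Connected) {f : V → α}
    (h : ∀ i j, G.Adj i j → f i = f j) (i j : V) : f i = f j := by
  obtain ⟨p⟩ := hG i j
  induction p with
  | nil => rfl
  | cons hadj _ ih => exact (h _ _ hadj).trans ih

theorem Connected.exists_adj_sub_ne_sub [Fintype V] (hG : G.Connected) {u w : V → ℝ}
    (hne : u ≠ w) (hsum : ∑ i, u i = ∑ i, w i) : ∃ i j, G.Adj i j ∧ u i - u j ≠ w i - w j := by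
  by_contra! h
  apply hne
  have hconst : ∀ i j, u i - w i = u j - w j :=
    hG.apply_eq_of_forall_adj (f := fun i => u i - w i) fun i j hij => by linarith [h i j hij]
  have : Nonempty V := hG.nonempty
  obtain ⟨v₀⟩ := hG.nonempty
  have hcard : (Fintype.card V : ℝ) ≠ 0 := Nat.cast_ne_zero.mpr Fintype.card_ne_zero
  have hv₀ : (Fintype.card V : ℝ) * (u v₀ - w v₀) = 0 := by
    calc (Fintype.card V : ℝ) * (u v₀ - w v₀) = ∑ i, (u i - w i) := by
          simp [hconst _ v₀, mul_sub]
      _ = 0 := by rw [sum_sub_distrib, hsum, sub_self]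
  funext i
  linarith [hconst i v₀, (mul_eq_zero.mp hv₀).resolve_left hcard]

theorem Connected.exists_lt_adj_sub_ne_sub [Fintype V] [LinearOrder V] (hG : G.Connected)
    {u w : V → ℝ} (hne : u ≠ w) (hsum : ∑ i, u i = ∑ i, w i) :
    ∃ i j, i < j ∧ G.Adj i j ∧ u i - u j ≠ w i - w j := by
  obtain ⟨i, j, hadj, hdiff⟩ := hG.exists_adj_sub_ne_sub hne hsum
  rcases hadj.ne.lt_or_gt with hij | hji
  · exact ⟨i, j, hij, hadj, hdiff⟩
  · exact ⟨j, i, hji, hadj.symm, fun h => hdiff (by linarith)⟩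

end SimpleGraph

section EdgeLogLik

variable {V : Type*} [Fintype V] [LinearOrder V] (G : SimpleGraph V) [DecidableRel G.Adj]
  (φ : V → V → ℝ → ℝ)

def edgeLogLik (u : V → ℝ) : ℝ :=
  ∑ i, ∑ j, if i < j ∧ G.Adj i j then φ i j (u i - u j) else 0

variable {G φ}

theorem edgeLogLik_midpoint_lt (hG : G.Connected)
    (hφ : ∀ i j, i < j → G.Adj i j → ∀ s t : ℝ, s ≠ t →
      (φ i j s + φ i j t) / 2 < φ i j ((s + t) / 2))
    {u w : V → ℝ} (hne : u ≠ w) (hsum : ∑ i, u i = ∑ i, w i) :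
    (edgeLogLik G φ u + edgeLogLik G φ w) / 2 < edgeLogLik G φ (fun i => (u i + w i) / 2) := by
  set term : V → V → ℝ → ℝ := fun i j s => if i < j ∧ G.Adj i j then φ i j s else 0
  have term_le : ∀ i j s t, (term i j s + term i j t) / 2 ≤ term i j ((s + t) / 2) := by
    intro i j s t
    by_cases hij : i < j ∧ G.Adj i j
    · rcases eq_or_ne s t with rfl | hst
      · simp [term, hij]
      · simpa [term, hij] using (hφ i j hij.1 hij.2 s t hst).le
    · simp [term, hij]
  have hmid : ∀ i j, (u i + w i) / 2 - (u j + w j) / 2 = ((u i - u j) + (w i - w j)) / 2 :=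
    fun i j => by ring
  obtain ⟨a, b, hab, hadj, hdiff⟩ := hG.exists_lt_adj_sub_ne_sub hne hsum
  have hsplit : (edgeLogLik G φ u + edgeLogLik G φ w) / 2
      = ∑ i, ∑ j, (term i j (u i - u j) + term i j (w i - w j)) / 2 := by
    simp only [edgeLogLik, term, ← sum_add_distrib, sum_div]
  rw [hsplit]
  simp only [edgeLogLik, hmid]
  refine sum_lt_sum (fun i _ => sum_le_sum fun j _ => term_le i j _ _)
    ⟨a, mem_univ a, sum_lt_sum (fun j _ => term_le a j _ _) ⟨b, mem_univ b, ?_⟩⟩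
  simpa [term, hab, hadj] using hφ a b hab hadj _ _ hdiff

end EdgeLogLik

/-- if the comparison graph is connected, the log-likelihood
`l(u) = ∑_{edges {i,j}, i<j} φ_{ij}(u_i - u_j)`, built from strictly (midpoint) concave
functions `φ_{ij}`, is strictly concave on the hyperplane `{u | ∑ i, u i = 0}`;
consequently it has at most one maximizer on this hyperplane. -/
theorem mle_unique_on_connected_graph
    {n : ℕ} (G : SimpleGraph (Fin n)) [DecidableRel G.Adj]
    (hconn : G.Connected)
    (φ : Fin n → Fin n → ℝ → ℝ)
    (hφ : ∀ i j, i < j → G.Adj i j → ∀ s t : ℝ, s ≠ t →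
      (φ i j s + φ i j t) / 2 < φ i j ((s + t) / 2))
    (l : (Fin n → ℝ) → ℝ)
    (hl : ∀ u, l u = ∑ i : Fin n, ∑ j : Fin n,
      if i < j ∧ G.Adj i j then φ i j (u i - u j) else 0) :
    (∀ u w : Fin n → ℝ, u ≠ w → ∑ i, u i = 0 → ∑ i, w i = 0 →
      (l u + l w) / 2 < l (fun i => (u i + w i) / 2)) ∧
    (∀ u w : Fin n → ℝ, (∑ i, u i = 0) → (∑ i, w i = 0) →
      (∀ v : Fin n → ℝ, (∑ i, v i = 0) → l v ≤ l u) →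
      (∀ v : Fin n → ℝ, (∑ i, v i = 0) → l v ≤ l w) → u = w) := by
  obtain rfl : l = edgeLogLik G φ := funext hl
  have strict : ∀ u w : Fin n → ℝ, u ≠ w → ∑ i, u i = 0 → ∑ i, w i = 0 →
      (edgeLogLik G φ u + edgeLogLik G φ w) / 2 < edgeLogLik G φ (fun i => (u i + w i) / 2) :=
    fun u w hne hu hw => edgeLogLik_midpoint_lt hconn hφ hne (hu.trans hw.symm)
  refine ⟨strict, fun u w hu hw hmaxu hmaxw => ?_⟩
  by_contra hne
  have hmid : ∑ i, (u i + w i) / 2 = 0 := by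
    rw [← sum_div, sum_add_distrib, hu, hw, add_zero, zero_div]
  linarith [strict u w hne hu hw, hmaxu _ hmid, hmaxw u hu]
end

section
/- There exists an absolute constant c > 0 (independent of n, a, b and W) such that: for every n ≥ 3, every 0 < a ≤ b, and every symmetric n×n matrix W with zero diagonal and W_{ij} ∈ [a,b] for all i ≠ j, every nonzero vector x orthogonal to v satisfies c·(a/b)² ≤ (xᵀ L_sym x)/(xᵀ x) ≤ 2 − c·(a/b)². In particular, the second-smallest eigenvalue λ₂ of L_sym is at least c(a/b)² and the largest eigenvalue λ_n is at most 2 − c(a/b)², so max{1 − λ₂, λ_n − 1} ≤ 1 − c(a/b)². -/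
/-!
With `D i = ∑ j, W i j` and `y = D^{-1/2} x`, the Rayleigh quotient of `L_sym` at `x` is
`(Q - B) / Q` with `Q = ∑ Dᵢ yᵢ²` and `B = ∑ Wᵢⱼ yᵢ yⱼ`, and orthogonality to `v` becomes
`∑ Dᵢ yᵢ = 0`. Since `Q ∓ B = ½ ∑ Wᵢⱼ (yᵢ ∓ yⱼ)²`, comparing `W` with the constant `a` off the
diagonal gives `Q - B ≥ a (n ∑ yᵢ² - (∑ yᵢ)²)` and `Q + B ≥ a (n - 2) ∑ yᵢ²`. All degrees lie in
`[(n - 1) a, (n - 1) b]`, so `Q ≤ (n - 1) b ∑ yᵢ²`, and orthogonality with Cauchy–Schwarz gives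
`b² (∑ yᵢ)² ≤ n (b - a)² ∑ yᵢ²`. Hence `(Q - B) / Q ≥ (a / b)²` and `(Q + B) / Q ≥ a / (2 b)`,
so `c = 1 / 2` works.
-/

open Matrix Finset

variable {ι : Type*} [Fintype ι]

section QuadraticForm

variable {M : Matrix ι ι ℝ} (y : ι → ℝ)

lemma Matrix.IsSymm.sum_sum_mul_sq_right (hM : M.IsSymm) :
    ∑ i, ∑ j, M i j * y j ^ 2 = ∑ i, (∑ j, M i j) * y i ^ 2 := by
  rw [sum_comm]
  simp_rw [sum_mul, hM.apply]

lemma Matrix.IsSymm.sum_sum_mul_sub_sq (hM : M.IsSymm) :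
    ∑ i, ∑ j, M i j * (y i - y j) ^ 2 =
      2 * (∑ i, (∑ j, M i j) * y i ^ 2 - ∑ i, ∑ j, M i j * (y i * y j)) := by
  have expand : ∀ i j, M i j * (y i - y j) ^ 2 =
      M i j * y i ^ 2 + M i j * y j ^ 2 - 2 * (M i j * (y i * y j)) := fun i j => by ring
  simp_rw [expand, sum_sub_distrib, sum_add_distrib, hM.sum_sum_mul_sq_right, ← mul_sum,
    ← sum_mul]
  ring

lemma Matrix.IsSymm.sum_sum_mul_add_sq (hM : M.IsSymm) :
    ∑ i, ∑ j, M i j * (y i + y j) ^ 2 =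
      2 * (∑ i, (∑ j, M i j) * y i ^ 2 + ∑ i, ∑ j, M i j * (y i * y j)) := by
  have expand : ∀ i j, M i j * (y i + y j) ^ 2 =
      M i j * y i ^ 2 + M i j * y j ^ 2 + 2 * (M i j * (y i * y j)) := fun i j => by ring
  simp_rw [expand, sum_add_distrib, hM.sum_sum_mul_sq_right, ← mul_sum, ← sum_mul]
  ring

lemma sum_sum_sub_sq :
    ∑ i, ∑ j, (y i - y j) ^ 2 = 2 * (Fintype.card ι * ∑ i, y i ^ 2 - (∑ i, y i) ^ 2) := by
  have h := (IsSymm.ext (A := of fun _ _ => (1 : ℝ)) fun _ _ => rfl).sum_sum_mul_sub_sq y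
  simpa [sq, sum_mul_sum, ← mul_sum] using h

lemma sum_sum_add_sq :
    ∑ i, ∑ j, (y i + y j) ^ 2 = 2 * (Fintype.card ι * ∑ i, y i ^ 2 + (∑ i, y i) ^ 2) := by
  have h := (IsSymm.ext (A := of fun _ _ => (1 : ℝ)) fun _ _ => rfl).sum_sum_mul_add_sq y
  simpa [sq, sum_mul_sum, ← mul_sum] using h

end QuadraticForm

section Weighted

variable {W : Matrix ι ι ℝ} {a b : ℝ} (y : ι → ℝ)

lemma Matrix.IsSymm.mul_card_sum_sq_sub_sq_sum_le (hW : W.IsSymm)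
    (hoff : ∀ i j, i ≠ j → a ≤ W i j) :
    a * (Fintype.card ι * ∑ i, y i ^ 2 - (∑ i, y i) ^ 2) ≤
      ∑ i, (∑ j, W i j) * y i ^ 2 - ∑ i, ∑ j, W i j * (y i * y j) := by
  have termwise : ∀ i j, a * (y i - y j) ^ 2 ≤ W i j * (y i - y j) ^ 2 := fun i j => by
    rcases eq_or_ne i j with rfl | hij
    · simp
    · exact mul_le_mul_of_nonneg_right (hoff i j hij) (sq_nonneg _)
  have h := sum_le_sum fun i (_ : i ∈ univ) => sum_le_sum fun j (_ : j ∈ univ) => termwise i j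
  rw [hW.sum_sum_mul_sub_sq] at h
  simp_rw [← mul_sum] at h
  rw [sum_sum_sub_sq] at h
  linarith

lemma Matrix.IsSymm.mul_card_sub_two_mul_sum_sq_le (hW : W.IsSymm) (ha : 0 ≤ a)
    (hdiag : ∀ i, W i i = 0) (hoff : ∀ i j, i ≠ j → a ≤ W i j) :
    a * ((Fintype.card ι - 2) * ∑ i, y i ^ 2) ≤
      ∑ i, (∑ j, W i j) * y i ^ 2 + ∑ i, ∑ j, W i j * (y i * y j) := by
  classical
  have termwise : ∀ i j, a * (y i + y j) ^ 2 - (if i = j then 4 * a * y i ^ 2 else 0) ≤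
      W i j * (y i + y j) ^ 2 := fun i j => by
    rcases eq_or_ne i j with rfl | hij
    · rw [if_pos rfl, hdiag]
      linarith
    · rw [if_neg hij, sub_zero]
      exact mul_le_mul_of_nonneg_right (hoff i j hij) (sq_nonneg _)
  have h := sum_le_sum fun i (_ : i ∈ univ) => sum_le_sum fun j (_ : j ∈ univ) => termwise i j
  rw [hW.sum_sum_mul_add_sq] at h
  simp_rw [sum_sub_distrib, sum_ite_eq, if_pos (mem_univ _), ← mul_sum] at h
  rw [sum_sum_add_sq] at h
  nlinarith [mul_nonneg ha (sq_nonneg (∑ i, y i))]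

end Weighted

section Degree

variable {f : ι → ℝ} {i : ι} {a b : ℝ}

lemma card_sub_one_mul_le_sum (hi : f i = 0) (hf : ∀ j, j ≠ i → a ≤ f j) :
    (Fintype.card ι - 1) * a ≤ ∑ j, f j := by
  classical
  have termwise : ∀ j, a - (if j = i then a else 0) ≤ f j := fun j => by
    split_ifs with hj
    · rw [hj, hi, sub_self]
    · rw [sub_zero]; exact hf j hj
  have h := sum_le_sum fun j (_ : j ∈ univ) => termwise j
  rw [sum_sub_distrib, sum_ite_eq', if_pos (mem_univ _), sum_const, card_univ,
    nsmul_eq_mul] at h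
  linarith

lemma sum_le_card_sub_one_mul (hi : f i = 0) (hf : ∀ j, j ≠ i → f j ≤ b) :
    ∑ j, f j ≤ (Fintype.card ι - 1) * b := by
  have h := card_sub_one_mul_le_sum (f := fun j => -f j) (a := -b) (by simp [hi])
    fun j hj => neg_le_neg (hf j hj)
  rw [sum_neg_distrib] at h
  linarith

lemma sum_pos_of_two_le_card (hn : 2 ≤ Fintype.card ι) (ha : 0 < a) (hi : f i = 0)
    (hf : ∀ j, j ≠ i → a ≤ f j) : 0 < ∑ j, f j := by
  have h := card_sub_one_mul_le_sum hi hf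
  have h2 : (2 : ℝ) ≤ Fintype.card ι := by exact_mod_cast hn
  nlinarith

end Degree

lemma sq_mul_sum_le_of_sum_mul_eq_zero {D y : ι → ℝ} {m r : ℝ} (horth : ∑ i, D i * y i = 0)
    (hD : ∀ i, (m - D i) ^ 2 ≤ r) :
    (m * ∑ i, y i) ^ 2 ≤ Fintype.card ι * r * ∑ i, y i ^ 2 := by
  have hshift : m * ∑ i, y i = ∑ i, (m - D i) * y i := by
    simp_rw [sub_mul, sum_sub_distrib, horth, sub_zero, mul_sum]
  have hsum : ∑ i, (m - D i) ^ 2 ≤ Fintype.card ι * r := by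
    simpa using sum_le_card_nsmul univ _ r fun i _ => hD i
  rw [hshift]
  exact (sum_mul_sq_le_sq_mul_sq _ _ _).trans
    (mul_le_mul_of_nonneg_right hsum (sum_nonneg fun i _ => sq_nonneg _))

section Rayleigh

variable {W : Matrix ι ι ℝ} {a b : ℝ} (y : ι → ℝ)

lemma sum_degree_mul_sq_le (hdiag : ∀ i, W i i = 0) (hle : ∀ i j, i ≠ j → W i j ≤ b) :
    ∑ i, (∑ j, W i j) * y i ^ 2 ≤ (Fintype.card ι - 1) * b * ∑ i, y i ^ 2 := by
  rw [mul_sum]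
  exact sum_le_sum fun i _ => mul_le_mul_of_nonneg_right
    (sum_le_card_sub_one_mul (hdiag i) fun j hj => hle i j hj.symm) (sq_nonneg _)

variable (hW : W.IsSymm) (hdiag : ∀ i, W i i = 0) (hoff : ∀ i j, i ≠ j → W i j ∈ Set.Icc a b)
  (ha : 0 < a) (hab : a ≤ b)
include hW hdiag hoff ha hab

lemma sq_div_mul_sum_degree_mul_sq_le_sub (hn : 2 ≤ Fintype.card ι)
    (horth : ∑ i, (∑ j, W i j) * y i = 0) :
    (a / b) ^ 2 * ∑ i, (∑ j, W i j) * y i ^ 2 ≤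
      ∑ i, (∑ j, W i j) * y i ^ 2 - ∑ i, ∑ j, W i j * (y i * y j) := by
  have hb : 0 < b := ha.trans_le hab
  have hn1 : (0 : ℝ) < Fintype.card ι - 1 := by
    have : (2 : ℝ) ≤ Fintype.card ι := by exact_mod_cast hn
    linarith
  have hS : 0 ≤ ∑ i, y i ^ 2 := sum_nonneg fun i _ => sq_nonneg _
  have hCS := sq_mul_sum_le_of_sum_mul_eq_zero horth (m := (Fintype.card ι - 1) * b)
    (r := ((Fintype.card ι - 1) * (b - a)) ^ 2) fun i => by
      have hlo := card_sub_one_mul_le_sum (hdiag i) fun j hj => (hoff i j hj.symm).1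
      have hhi := sum_le_card_sub_one_mul (hdiag i) fun j hj => (hoff i j hj.symm).2
      exact pow_le_pow_left₀ (by linarith) (by linarith) 2
  have hgap := hW.mul_card_sum_sq_sub_sq_sum_le y fun i j hij => (hoff i j hij).1
  have hQ := sum_degree_mul_sq_le y hdiag fun i j hij => (hoff i j hij).2
  set n : ℝ := (Fintype.card ι : ℝ)
  set S := ∑ i, y i ^ 2
  have hsum : b ^ 2 * (∑ i, y i) ^ 2 ≤ n * (b - a) ^ 2 * S := by
    refine le_of_mul_le_mul_left ?_ (pow_pos hn1 2)
    linarith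
  rw [div_pow, div_mul_eq_mul_div, div_le_iff₀ (by positivity)]
  calc a ^ 2 * ∑ i, (∑ j, W i j) * y i ^ 2 ≤ a ^ 2 * (n * S) * b := by
        rw [mul_assoc]; gcongr; nlinarith
    _ ≤ a ^ 2 * (n * S) * (2 * b - a) := by gcongr; linarith
    _ = a * (b ^ 2 * (n * S) - n * (b - a) ^ 2 * S) := by ring
    _ ≤ a * (b ^ 2 * (n * S - (∑ i, y i) ^ 2)) := by gcongr; linarith
    _ = b ^ 2 * (a * (n * S - (∑ i, y i) ^ 2)) := by ring
    _ ≤ _ := by rw [mul_comm _ (b ^ 2)]; gcongr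

lemma div_mul_sum_degree_mul_sq_le_two_mul_add (hn : 3 ≤ Fintype.card ι) :
    a / b * ∑ i, (∑ j, W i j) * y i ^ 2 ≤
      2 * (∑ i, (∑ j, W i j) * y i ^ 2 + ∑ i, ∑ j, W i j * (y i * y j)) := by
  have hb : 0 < b := ha.trans_le hab
  have hn3 : (3 : ℝ) ≤ Fintype.card ι := by exact_mod_cast hn
  have hS : 0 ≤ ∑ i, y i ^ 2 := sum_nonneg fun i _ => sq_nonneg _
  have hsum := hW.mul_card_sub_two_mul_sum_sq_le y ha.le hdiag fun i j hij => (hoff i j hij).1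
  have hQ := sum_degree_mul_sq_le y hdiag fun i j hij => (hoff i j hij).2
  rw [div_mul_eq_mul_div, div_le_iff₀ (by positivity)]
  nlinarith [mul_nonneg (mul_nonneg ha.le hb.le) hS]

end Rayleigh

section Normalization

variable (x : ι → ℝ)

lemma dotProduct_of_div_mul_mulVec (W : Matrix ι ι ℝ) (s : ι → ℝ) :
    x ⬝ᵥ (of (fun i j => W i j / (s i * s j)) *ᵥ x) =
      ∑ i, ∑ j, W i j * (x i / s i * (x j / s j)) := by
  simp only [dotProduct, mulVec, of_apply, mul_sum]
  exact sum_congr rfl fun i _ => sum_congr rfl fun j _ => by ring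

variable {D : ι → ℝ} (hD : ∀ i, 0 < D i)
include hD

lemma dotProduct_self_eq_sum_mul_div_sqrt_sq :
    x ⬝ᵥ x = ∑ i, D i * (x i / √(D i)) ^ 2 := by
  refine sum_congr rfl fun i _ => ?_
  rw [div_pow, Real.sq_sqrt (hD i).le, mul_div_cancel₀ _ (hD i).ne', sq]

lemma sum_mul_sqrt_div_eq (T : ℝ) :
    ∑ i, x i * √(D i / T) = (∑ i, D i * (x i / √(D i))) / √T := by
  rw [sum_div]
  refine sum_congr rfl fun i _ => ?_
  rw [mul_div_left_comm (D i), Real.div_sqrt, Real.sqrt_div (hD i).le, mul_div_assoc]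

end Normalization

/-- there is an absolute constant `c > 0` such that for every `n ≥ 3`,
every `0 < a ≤ b` and every symmetric weight matrix `W` with zero diagonal and
off-diagonal entries in `[a,b]`, every nonzero `x` orthogonal to
`v = (√(D_i/∑_k D_k))_i` satisfies
`c(a/b)² ≤ xᵀ L_sym x / xᵀx ≤ 2 − c(a/b)²` for the normalized Laplacian
`L_sym = I − D^{-1/2} W D^{-1/2}`. -/
theorem cheeger_spectral_gap_dense_weights :
    ∃ c : ℝ, 0 < c ∧
      ∀ (n : ℕ), 3 ≤ n → ∀ a b : ℝ, 0 < a → a ≤ b →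
        ∀ W : Matrix (Fin n) (Fin n) ℝ, W.IsSymm → (∀ i, W i i = 0) →
          (∀ i j, i ≠ j → W i j ∈ Set.Icc a b) →
          ∀ x : Fin n → ℝ, x ≠ 0 →
            (∑ i, x i * Real.sqrt ((∑ j, W i j) / (∑ k, ∑ j, W k j)) = 0) →
            c * (a / b) ^ 2 ≤
                (x ⬝ᵥ ((1 : Matrix (Fin n) (Fin n) ℝ) -
                  Matrix.of (fun i j =>
                    W i j / (Real.sqrt (∑ l, W i l) * Real.sqrt (∑ l, W j l)))).mulVec x) /
                  (x ⬝ᵥ x) ∧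
              (x ⬝ᵥ ((1 : Matrix (Fin n) (Fin n) ℝ) -
                  Matrix.of (fun i j =>
                    W i j / (Real.sqrt (∑ l, W i l) * Real.sqrt (∑ l, W j l)))).mulVec x) /
                  (x ⬝ᵥ x) ≤ 2 - c * (a / b) ^ 2 := by
  refine ⟨1 / 2, by norm_num, ?_⟩
  intro n hn a b ha hab W hW hdiag hoff x hx horth
  have hcard : 3 ≤ Fintype.card (Fin n) := by rwa [Fintype.card_fin]
  have hdeg : ∀ i, 0 < ∑ j, W i j := fun i =>
    sum_pos_of_two_le_card (by omega) ha (hdiag i) fun j hj => (hoff i j hj.symm).1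
  have hxx : 0 < x ⬝ᵥ x :=
    (sum_nonneg fun i _ => mul_self_nonneg (x i)).lt_of_ne' (dotProduct_self_eq_zero.not.mpr hx)
  rw [sum_mul_sqrt_div_eq x hdeg, div_eq_zero_iff, or_iff_left
    (Real.sqrt_pos.mpr (sum_pos (fun i _ => hdeg i) ⟨⟨0, by omega⟩, mem_univ _⟩)).ne'] at horth
  rw [sub_mulVec, one_mulVec, dotProduct_sub, dotProduct_of_div_mul_mulVec]
  rw [dotProduct_self_eq_sum_mul_div_sqrt_sq x hdeg] at hxx ⊢
  have hb : 0 < b := ha.trans_le hab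
  have hlow := sq_div_mul_sum_degree_mul_sq_le_sub (fun i => x i / √(∑ j, W i j)) hW hdiag hoff
    ha hab (by omega) horth
  have hup := div_mul_sum_degree_mul_sq_le_two_mul_add (fun i => x i / √(∑ j, W i j)) hW hdiag
    hoff ha hab hcard
  beta_reduce at hlow hup
  have hratio : (a / b) ^ 2 * _ ≤ a / b * _ :=
    mul_le_mul_of_nonneg_right (pow_le_of_le_one (div_pos ha hb).le
      ((div_le_one hb).mpr hab) two_ne_zero) hxx.le
  constructor
  · rw [le_div_iff₀ hxx]
    linarith [mul_nonneg (sq_nonneg (a / b)) hxx.le]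
  · rw [div_le_iff₀ hxx]
    linarith
end
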